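/- Let m ≥ 2 and let Γ be a subgroup of Perm(Fin m) whose commutator subgroup ⁅Γ,Γ⁆ acts transitively on Fin m. Then for every finite complete graph, every m-edge-colouring c of it, and every j ∈ Fin m, the colouring c is Γ-switch equivalent to the constant colouring in which every edge has colour j. Consequently, for any a : Fin m → ℕ with a(i) ≥ 2 for all i, the least n such that every m-edge-colouring of the complete graph on n vertices is Γ-switch equivalent to a colouring containing, for some i, a monochromatic K_{a(i)} of colour i equals min_{i ∈ Fin m} a(i). -/

import Mathlib

open scoped Classical in
/-- Switch the edge-colouring `c` at vertex `v` with permutation `π`: every edge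
incident with `v` has its colour replaced by its image under `π`. -/
noncomputable def switchAt {V K : Type*} (c : Sym2 V → K) (π : Equiv.Perm K) (v : V) :
    Sym2 V → K :=
  fun s => if v ∈ s then π (c s) else c s

/-- Two colourings are `Γ`-switch equivalent if one is obtained from the other by a
finite sequence of switches at vertices with permutations from `Γ`. -/
def SwitchEquiv {V K : Type*} (Γ : Subgroup (Equiv.Perm K)) (c c' : Sym2 V → K) : Prop :=
  Relation.ReflTransGen (fun d d' => ∃ π ∈ Γ, ∃ v : V, d' = switchAt d π v) c c'

/-- The colouring `c` contains a monochromatic complete graph on `t` vertices of colour `i`. -/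
def HasMonoK {V K : Type*} (c : Sym2 V → K) (i : K) (t : ℕ) : Prop :=
  ∃ S : Finset V, S.card = t ∧ ∀ x ∈ S, ∀ y ∈ S, x ≠ y → c s(x, y) = i

/-!
For an edge `uw`, switching with `h⁻¹` at `w`, `g⁻¹` at `u`, `h` at `w` and `g` at `u` applies
`g h g⁻¹ h⁻¹ = ⁅g, h⁆` to the colour of `uw`, while any other edge meets only one of `u`, `w` and
sees `g g⁻¹` or `h h⁻¹`. Hence every element of `⁅Γ, Γ⁆` can be applied to a single edge, and
transitivity of `⁅Γ, Γ⁆` recolours the edges one at a time to any prescribed colours. With every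
colouring equivalent to a constant one, the Ramsey number is `min a`: the constant colouring of
colour `i` on `a i` vertices is a monochromatic `K_{a i}`, and no colouring of fewer than `min a`
vertices contains any `K_{a i}`.
-/

open Function

section Switching

variable {V K : Type*} {Γ : Subgroup (Equiv.Perm K)}

lemma switchAt_switchAt_inv (c : Sym2 V → K) (π : Equiv.Perm K) (v : V) :
    switchAt (switchAt c π v) π⁻¹ v = c := by
  funext s
  by_cases h : v ∈ s <;> simp [switchAt, h]

lemma switchEquiv_switchAt {π : Equiv.Perm K} (hπ : π ∈ Γ) (c : Sym2 V → K) (v : V) :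
    SwitchEquiv Γ c (switchAt c π v) :=
  Relation.ReflTransGen.single ⟨π, hπ, v, rfl⟩

lemma SwitchEquiv.refl (c : Sym2 V → K) : SwitchEquiv Γ c c :=
  Relation.ReflTransGen.refl

lemma SwitchEquiv.trans {c c' c'' : Sym2 V → K} (h : SwitchEquiv Γ c c')
    (h' : SwitchEquiv Γ c' c'') : SwitchEquiv Γ c c'' :=
  Relation.ReflTransGen.trans h h'

lemma SwitchEquiv.symm {c c' : Sym2 V → K} (h : SwitchEquiv Γ c c') : SwitchEquiv Γ c' c := by
  have : Std.Symm (fun d d' : Sym2 V → K => ∃ π ∈ Γ, ∃ v : V, d' = switchAt d π v) := ⟨by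
    rintro d d' ⟨π, hπ, v, rfl⟩
    exact ⟨π⁻¹, inv_mem hπ, v, (switchAt_switchAt_inv d π v).symm⟩⟩
  exact Relation.ReflTransGen.stdSymm.symm _ _ h

open scoped commutatorElement in
lemma switchAt_commutator [DecidableEq V] (c : Sym2 V → K) (g h : Equiv.Perm K) {u w : V}
    (huw : u ≠ w) :
    switchAt (switchAt (switchAt (switchAt c h⁻¹ w) g⁻¹ u) h w) g u
      = update c s(u, w) (⁅g, h⁆ (c s(u, w))) := by
  funext s
  by_cases hs : s = s(u, w)
  · subst hs
    simp [switchAt, commutatorElement_def]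
  · have hnot_both : ¬ (u ∈ s ∧ w ∈ s) := by rwa [Sym2.mem_and_mem_iff huw]
    by_cases hu : u ∈ s <;> by_cases hw : w ∈ s <;> simp_all [switchAt]

lemma switchEquiv_update_of_mem_commutator [DecidableEq V] {π : Equiv.Perm K}
    (hπ : π ∈ ⁅Γ, Γ⁆) (c : Sym2 V → K) {u w : V} (huw : u ≠ w) :
    SwitchEquiv Γ c (update c s(u, w) (π (c s(u, w)))) := by
  rw [Subgroup.commutator_def] at hπ
  induction hπ using Subgroup.closure_induction generalizing c with
  | mem x hx =>
    obtain ⟨g, hg, h, hh, rfl⟩ := hx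
    rw [← switchAt_commutator c g h huw]
    exact (((switchEquiv_switchAt (inv_mem hh) c w).trans
      (switchEquiv_switchAt (inv_mem hg) _ u)).trans
      (switchEquiv_switchAt hh _ w)).trans (switchEquiv_switchAt hg _ u)
  | one => simpa using SwitchEquiv.refl c
  | mul x y _ _ ihx ihy =>
    simpa using (ihy c).trans (ihx _)
  | inv x _ ihx =>
    simpa using (ihx (update c s(u, w) (x⁻¹ (c s(u, w))))).symm

variable (htrans : ∀ i j : K, ∃ π ∈ (⁅Γ, Γ⁆ : Subgroup (Equiv.Perm K)), π i = j)
include htrans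

lemma switchEquiv_update [DecidableEq V] (c : Sym2 V → K) {e : Sym2 V} (he : ¬ e.IsDiag)
    (k : K) : SwitchEquiv Γ c (update c e k) := by
  induction e using Sym2.ind with
  | _ u w =>
    obtain ⟨π, hπ, rfl⟩ := htrans (c s(u, w)) k
    exact switchEquiv_update_of_mem_commutator hπ c (by simpa using he)

lemma switchEquiv_of_forall_isDiag [Finite V] {c c' : Sym2 V → K}
    (hdiag : ∀ e : Sym2 V, e.IsDiag → c e = c' e) : SwitchEquiv Γ c c' := by
  classical
  have : Fintype (Sym2 V) := Fintype.ofFinite _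
  suffices h : ∀ (s : Finset (Sym2 V)) (c : Sym2 V → K),
      (∀ e, e.IsDiag → c e = c' e) → (∀ e ∉ s, c e = c' e) → SwitchEquiv Γ c c' from
    h Finset.univ c hdiag (by simp)
  intro s
  induction s using Finset.induction_on with
  | empty => exact fun c _ hc => funext (fun e => hc e (Finset.notMem_empty e)) ▸ .refl c
  | insert e s _ ih =>
    intro c hdiag hout
    have hstep : SwitchEquiv Γ c (update c e (c' e)) := by
      by_cases he : e.IsDiag
      · simpa [← hdiag e he] using SwitchEquiv.refl c
      · exact switchEquiv_update htrans c he _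
    refine hstep.trans (ih _ (fun e' he' => ?_) (fun e' he' => ?_))
    · by_cases h : e' = e <;> simp [h, hdiag e' he']
    · by_cases h : e' = e
      · simp [h]
      · simpa [h] using hout e' (by simp [h, he'])

lemma exists_switchEquiv_const [Finite V] (c : Sym2 V → K) (j : K) :
    ∃ c', SwitchEquiv Γ c c' ∧ ∀ x y : V, x ≠ y → c' s(x, y) = j := by
  classical
  refine ⟨fun e => if e.IsDiag then c e else j, switchEquiv_of_forall_isDiag htrans ?_, ?_⟩
  · intro e he
    simp [he]
  · intro x y hxy
    simp [hxy]

end Switching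

section Ramsey

variable {V K : Type*}

lemma hasMonoK_card_of_forall [Fintype V] {c : Sym2 V → K} {j : K}
    (hc : ∀ x y : V, x ≠ y → c s(x, y) = j) : HasMonoK c j (Fintype.card V) :=
  ⟨Finset.univ, Finset.card_univ, fun x _ y _ hxy => hc x y hxy⟩

lemma HasMonoK.le_card [Fintype V] {c : Sym2 V → K} {i : K} {t : ℕ} (h : HasMonoK c i t) :
    t ≤ Fintype.card V := by
  obtain ⟨S, rfl, _⟩ := h
  exact S.card_le_univ

lemma isLeast_switchRamsey [Nonempty K] {Γ : Subgroup (Equiv.Perm K)}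
    (htrans : ∀ i j : K, ∃ π ∈ (⁅Γ, Γ⁆ : Subgroup (Equiv.Perm K)), π i = j) (a : K → ℕ) :
    IsLeast {n : ℕ | ∀ c : Sym2 (Fin n) → K,
      ∃ c', SwitchEquiv Γ c c' ∧ ∃ i : K, HasMonoK c' i (a i)} (⨅ i, a i) := by
  obtain ⟨i₀, hi₀⟩ := ciInf_mem a
  refine ⟨fun c => ?_, fun n hn => ?_⟩
  · obtain ⟨c', hcc', hconst⟩ := exists_switchEquiv_const htrans c i₀
    exact ⟨c', hcc', i₀, by simpa [hi₀] using hasMonoK_card_of_forall hconst⟩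
  · obtain ⟨c', -, i, hmono⟩ := hn (fun _ => i₀)
    calc ⨅ i, a i ≤ a i := ciInf_le (OrderBot.bddBelow _) i
      _ ≤ n := by simpa using hmono.le_card

end Ramsey

theorem stmt5_general (m : ℕ) (hm : 2 ≤ m) (Γ : Subgroup (Equiv.Perm (Fin m)))
    (htrans : ∀ i j : Fin m, ∃ π ∈ (⁅Γ, Γ⁆ : Subgroup (Equiv.Perm (Fin m))), π i = j)
    (a : Fin m → ℕ) :
    (∀ (V : Type) [Fintype V] (c : Sym2 V → Fin m) (j : Fin m),
      ∃ c', SwitchEquiv Γ c c' ∧ ∀ x y : V, x ≠ y → c' s(x, y) = j) ∧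
    IsLeast {n : ℕ | ∀ c : Sym2 (Fin n) → Fin m,
      ∃ c', SwitchEquiv Γ c c' ∧ ∃ i : Fin m, HasMonoK c' i (a i)} (⨅ i, a i) := by
  have : Nonempty (Fin m) := ⟨⟨0, by omega⟩⟩
  exact ⟨fun V _ c j => exists_switchEquiv_const htrans c j, isLeast_switchRamsey htrans a⟩

/-- If the commutator subgroup `⁅Γ,Γ⁆` acts transitively on the colours, then every
colouring of a finite complete graph is `Γ`-switch equivalent to any constant colouring,
and the `Γ`-switch Ramsey number `R_Γ(a₁,…,a_m)` equals `min_i a i`. -/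
theorem stmt5 (m : ℕ) (hm : 2 ≤ m) (Γ : Subgroup (Equiv.Perm (Fin m)))
    (htrans : ∀ i j : Fin m, ∃ π ∈ (⁅Γ, Γ⁆ : Subgroup (Equiv.Perm (Fin m))), π i = j)
    (a : Fin m → ℕ) (ha : ∀ i, 2 ≤ a i) :
    (∀ (V : Type) [Fintype V] (c : Sym2 V → Fin m) (j : Fin m),
      ∃ c', SwitchEquiv Γ c c' ∧ ∀ x y : V, x ≠ y → c' s(x, y) = j) ∧
    IsLeast {n : ℕ | ∀ c : Sym2 (Fin n) → Fin m,
      ∃ c', SwitchEquiv Γ c c' ∧ ∃ i : Fin m, HasMonoK c' i (a i)} (⨅ i, a i) :=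
  stmt5_general m hm Γ htrans a
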